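/- For every n ≥ 1, the n-th monic Sobolev extremal polynomial L_n has at least one real zero of odd multiplicity lying in the interior of the convex hull of supp μ₀. -/

import Mathlib

open MeasureTheory Polynomial Set

/-- The (topological) support of a Borel measure on `ℝ`. -/
def msupport (μ : Measure ℝ) : Set ℝ :=
  {x : ℝ | ∀ U : Set ℝ, IsOpen U → x ∈ U → 0 < μ U}

/-- The Sobolev `p`-norm `‖f‖_{S,p,m} = (∑_{k=0}^m ∫ |f^{(k)}|^p dμ_k)^(1/p)` of a polynomial. -/
noncomputable def sobNormM (p : ℝ) (m : ℕ) (μ : ℕ → Measure ℝ) (f : Polynomial ℝ) : ℝ :=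
  (∑ k ∈ Finset.range (m + 1), ∫ x, |(derivative^[k] f).eval x| ^ p ∂(μ k)) ^ (1 / p)

/-- `L` is the `n`-th monic Sobolev extremal polynomial with respect to `‖·‖_{S,p,m}`. -/
def IsExtremalM (p : ℝ) (m : ℕ) (μ : ℕ → Measure ℝ) (n : ℕ) (L : Polynomial ℝ) : Prop :=
  L.Monic ∧ L.natDegree = n ∧
    ∀ Q : Polynomial ℝ, Q.Monic → Q.natDegree = n →
      sobNormM p m μ L ≤ sobNormM p m μ Q

/-!
If `L` had no zero of odd multiplicity inside the convex hull `[a, b]` of `supp μ₀`, it would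
keep one sign on `[a, b]`, hence `μ₀`-almost everywhere. Shifting `L` towards zero by a small
constant `t` keeps it monic of degree `n` and leaves its derivatives unchanged, but strictly
decreases `∫ |L|^p dμ₀`: near a point of `supp μ₀` where `L ≠ 0` the integrand drops by order `t`,
and elsewhere it grows by at most `t^p = o(t)` since `p > 1`. This contradicts extremality.
-/

open Filter Topology

namespace Real

theorem abs_sub_rpow_le_rpow_add_rpow {p v t : ℝ} (hp : 0 ≤ p) (hv : 0 ≤ v) (ht : 0 ≤ t) :
    |v - t| ^ p ≤ v ^ p + t ^ p := by
  have hvp : 0 ≤ v ^ p := rpow_nonneg hv p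
  have htp : 0 ≤ t ^ p := rpow_nonneg ht p
  rcases le_total t v with htv | hvt
  · have : |v - t| ≤ v := by rw [abs_of_nonneg (by linarith)]; linarith
    linarith [rpow_le_rpow (abs_nonneg _) this hp]
  · have : |v - t| ≤ t := by rw [abs_of_nonpos (by linarith)]; linarith
    linarith [rpow_le_rpow (abs_nonneg _) this hp]

theorem rpow_add_mul_rpow_sub_one_le {p v t : ℝ} (hp : 1 ≤ p) (hv : 0 < v) (ht : 0 ≤ t) :
    v ^ p + p * v ^ (p - 1) * t ≤ (v + t) ^ p := by
  have hbern := one_add_mul_self_le_rpow_one_add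
    (by linarith [div_nonneg ht hv.le] : -1 ≤ t / v) hp
  have hscale : (v + t) ^ p = v ^ p * (1 + t / v) ^ p := by
    rw [← mul_rpow hv.le (by positivity), mul_add, mul_one, mul_div_cancel₀ _ hv.ne']
  have hpow : v ^ p = v ^ (p - 1) * v := by
    rw [← rpow_add_one hv.ne', sub_add_cancel]
  calc v ^ p + p * v ^ (p - 1) * t = v ^ p * (1 + p * (t / v)) := by
        rw [hpow]; field_simp
    _ ≤ (v + t) ^ p := by
        rw [hscale]; exact mul_le_mul_of_nonneg_left hbern (rpow_nonneg hv.le p)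

theorem abs_sub_rpow_add_mul_le {p c v t : ℝ} (hp : 1 ≤ p) (hc : 0 < c) (hcv : c ≤ v)
    (ht : 0 ≤ t) (htc : t ≤ c / 2) : |v - t| ^ p + p * (c / 2) ^ (p - 1) * t ≤ |v| ^ p := by
  have hvt : c / 2 ≤ v - t := by linarith
  have hvt_pos : 0 < v - t := by linarith
  have hmono : (c / 2) ^ (p - 1) ≤ (v - t) ^ (p - 1) := rpow_le_rpow (by linarith) hvt (by linarith)
  have htangent := rpow_add_mul_rpow_sub_one_le hp hvt_pos ht
  rw [sub_add_cancel] at htangent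
  rw [abs_of_pos hvt_pos, abs_of_pos (by linarith)]
  nlinarith [mul_le_mul_of_nonneg_right hmono ht, (by linarith : 0 ≤ p)]

theorem eventually_rpow_mul_lt {q : ℝ} (hq : 0 < q) (a : ℝ) {b : ℝ} (hb : 0 < b) :
    ∀ᶠ t in 𝓝 (0 : ℝ), t ^ q * a < b := by
  have hlim : Tendsto (fun t : ℝ => t ^ q * a) (𝓝 0) (𝓝 0) := by
    simpa [zero_rpow hq.ne'] using (continuousAt_rpow_const 0 q (Or.inr hq.le)).tendsto.mul_const a
  exact hlim.eventually (eventually_lt_nhds hb)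

end Real

theorem exists_integral_abs_sub_rpow_lt {X : Type*} [MeasurableSpace X] {μ : Measure X}
    [IsFiniteMeasure μ] {p : ℝ} (hp : 1 < p) {u : X → ℝ} (hu : AEStronglyMeasurable u μ)
    (hint : Integrable (fun x => |u x| ^ p) μ) (hu0 : ∀ᵐ x ∂μ, 0 ≤ u x)
    {U : Set X} (hU : MeasurableSet U) (hμU : μ U ≠ 0) {c : ℝ} (hc : 0 < c)
    (hcU : ∀ x ∈ U, c ≤ u x) :
    ∃ t > 0, ∫ x, |u x - t| ^ p ∂μ < ∫ x, |u x| ^ p ∂μ := by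
  set C := p * (c / 2) ^ (p - 1)
  have hμU' : 0 < μ.real U := ENNReal.toReal_pos hμU (measure_ne_top μ U)
  -- Lowering `u` by `t` gains at least `C t` on `U` and loses at most `t ^ p = o(t)` elsewhere.
  have hsmall :
      ∀ᶠ t in 𝓝[>] (0 : ℝ), t ≤ c / 2 ∧ t ^ (p - 1) * μ.real univ < C * μ.real U :=
    ((eventually_le_nhds (half_pos hc)).and
      (Real.eventually_rpow_mul_lt (sub_pos.2 hp) _ (by positivity))).filter_mono
      nhdsWithin_le_nhds
  obtain ⟨t, ⟨htc, htμ⟩, ht : 0 < t⟩ := (hsmall.and self_mem_nhdsWithin).exists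
  refine ⟨t, ht, ?_⟩
  set g : X → ℝ := fun x => |u x| ^ p + t ^ p - U.indicator (fun _ => C * t) x
  have hbound : ∀ x, 0 ≤ u x → |u x - t| ^ p ≤ g x := by
    intro x hux
    by_cases hxU : x ∈ U
    · simp only [g, indicator_of_mem hxU]
      linarith [Real.abs_sub_rpow_add_mul_le hp.le hc (hcU x hxU) ht.le htc,
        Real.rpow_nonneg ht.le p]
    · simpa [g, indicator_of_notMem hxU, abs_of_nonneg hux] using
        Real.abs_sub_rpow_le_rpow_add_rpow (by linarith) hux ht.le
  have hgint : Integrable g μ :=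
    (hint.add (integrable_const _)).sub ((integrable_const _).indicator hU)
  have hint_t : Integrable (fun x => |u x - t| ^ p) μ := by
    refine hgint.mono' ?_ ?_
    · exact ((hu.sub aestronglyMeasurable_const).norm).aemeasurable.pow_const p
        |>.aestronglyMeasurable
    · filter_upwards [hu0] with x hx
      rw [Real.norm_of_nonneg (Real.rpow_nonneg (abs_nonneg _) p)]
      exact hbound x hx
  have hgeq :
      ∫ x, g x ∂μ = ∫ x, |u x| ^ p ∂μ + t ^ p * μ.real univ - C * t * μ.real U := by
    rw [integral_sub (f := fun x => |u x| ^ p + t ^ p) (hint.add (integrable_const _))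
      ((integrable_const _).indicator hU), integral_add hint (integrable_const _),
      integral_const, integral_indicator_const _ hU, smul_eq_mul, smul_eq_mul]
    ring
  have hloss : t ^ p * μ.real univ < C * t * μ.real U := by
    rw [show t ^ p = t ^ (p - 1) * t by rw [← Real.rpow_add_one ht.ne', sub_add_cancel]]
    nlinarith
  calc ∫ x, |u x - t| ^ p ∂μ ≤ ∫ x, g x ∂μ :=
        integral_mono_ae hint_t hgint (by filter_upwards [hu0] with x hx using hbound x hx)
    _ < ∫ x, |u x| ^ p ∂μ := by linarith

theorem ae_mem_msupport (μ : Measure ℝ) : ∀ᵐ x ∂μ, x ∈ msupport μ := by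
  refine measure_null_of_locally_null _ fun x hx => ?_
  obtain ⟨U, hU, hxU, hμU⟩ : ∃ U : Set ℝ, IsOpen U ∧ x ∈ U ∧ μ U = 0 := by
    simpa [msupport, pos_iff_ne_zero] using hx
  exact ⟨U, mem_nhdsWithin_of_mem_nhds (hU.mem_nhds hxU), hμU⟩

theorem Continuous.integrable_of_isCompact_msupport {μ : Measure ℝ} [IsLocallyFiniteMeasure μ]
    (hK : IsCompact (msupport μ)) {g : ℝ → ℝ} (hg : Continuous g) : Integrable g μ := by
  rw [← Measure.restrict_eq_self_of_ae_mem (ae_mem_msupport μ)]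
  exact hg.continuousOn.integrableOn_compact hK

theorem exists_integral_abs_sub_rpow_lt_of_msupport {μ : Measure ℝ} [IsFiniteMeasure μ]
    (hK : IsCompact (msupport μ)) {p : ℝ} (hp : 1 < p) {f : ℝ → ℝ} (hf : Continuous f)
    (hsign : (∀ x ∈ msupport μ, 0 ≤ f x) ∨ ∀ x ∈ msupport μ, f x ≤ 0)
    {x₀ : ℝ} (hx₀ : x₀ ∈ msupport μ) (hfx₀ : f x₀ ≠ 0) :
    ∃ s : ℝ, ∫ x, |f x - s| ^ p ∂μ < ∫ x, |f x| ^ p ∂μ := by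
  wlog hpos : ∀ x ∈ msupport μ, 0 ≤ f x generalizing f
  · have hneg : ∀ x ∈ msupport μ, 0 ≤ -f x := fun x hx =>
      neg_nonneg.2 (hsign.resolve_left hpos x hx)
    obtain ⟨s, hs⟩ := this hf.neg (Or.inl hneg) (neg_ne_zero.2 hfx₀) hneg
    refine ⟨-s, ?_⟩
    simpa only [Pi.neg_apply, abs_neg, ← neg_add', sub_neg_eq_add] using hs
  have hfx₀ : 0 < f x₀ := (hpos x₀ hx₀).lt_of_ne' hfx₀
  obtain ⟨U, hUf, hU, hx₀U⟩ :=
    eventually_nhds_iff.1 (hf.continuousAt.eventually (lt_mem_nhds (half_lt_self hfx₀)))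
  obtain ⟨t, -, ht⟩ := exists_integral_abs_sub_rpow_lt hp hf.aestronglyMeasurable
    ((hf.abs.rpow_const fun _ => Or.inr (by linarith)).integrable_of_isCompact_msupport hK)
    ((ae_mem_msupport μ).mono hpos) hU.measurableSet (hx₀ U hU hx₀U).ne' (half_pos hfx₀)
    fun x hx => (hUf x hx).le
  exact ⟨t, ht⟩

theorem Ioo_csInf_csSup_subset_interior_convexHull {K : Set ℝ} (hK : IsCompact K)
    (hne : K.Nonempty) : Ioo (sInf K) (sSup K) ⊆ interior (convexHull ℝ K) := by
  rw [← interior_Icc]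
  refine interior_mono (Icc_subset_uIcc.trans ?_)
  rw [← segment_eq_uIcc]
  exact segment_subset_convexHull (hK.sInf_mem hne) (hK.sSup_mem hne)

namespace Polynomial

theorem exists_odd_rootMultiplicity_of_eval_mul_eval_neg {x y : ℝ} (hxy : x < y) (f : ℝ[X])
    (hf : f.eval x * f.eval y < 0) : ∃ z ∈ Ioo x y, Odd (f.rootMultiplicity z) := by
  induction hN : f.natDegree using Nat.strong_induction_on generalizing f with
  | _ N ih =>
  have hf0 : f ≠ 0 := by rintro rfl; simp at hf
  obtain ⟨z, hz, hfz⟩ : ∃ z ∈ Ioo x y, f.eval z = 0 := by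
    have hcont := f.continuous.continuousOn (s := Icc x y)
    rcases mul_neg_iff.1 hf with ⟨hx, hy⟩ | ⟨hx, hy⟩
    · exact intermediate_value_Ioo' hxy.le hcont ⟨hy, hx⟩
    · exact intermediate_value_Ioo hxy.le hcont ⟨hx, hy⟩
  set k := f.rootMultiplicity z
  by_cases hk : Odd k
  · exact ⟨z, hz, hk⟩
  rw [Nat.not_odd_iff_even] at hk
  -- Dividing out the even power `(X - z) ^ k` preserves the sign change and lowers the degree.
  set g := f /ₘ (X - C z) ^ k
  have hfg : (X - C z) ^ k * g = f := pow_mul_divByMonic_rootMultiplicity_eq f z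
  have hg0 : g ≠ 0 := fun hg => hf0 (by rw [← hfg, hg, mul_zero])
  have hdeg : g.natDegree < N := by
    have hk0 : 0 < k := (rootMultiplicity_pos hf0).2 hfz
    rw [← hN, ← hfg, natDegree_mul (pow_ne_zero _ (X_sub_C_ne_zero z)) hg0, natDegree_pow,
      natDegree_X_sub_C]
    omega
  have hg : g.eval x * g.eval y < 0 := by
    rw [← hfg] at hf
    simp only [eval_mul, eval_pow, eval_sub, eval_X, eval_C] at hf
    have : 0 ≤ (x - z) ^ k * (y - z) ^ k := by rw [← mul_pow]; exact hk.pow_nonneg _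
    nlinarith
  obtain ⟨w, hw, hodd⟩ := ih _ hdeg g hg rfl
  refine ⟨w, hw, ?_⟩
  rw [← hfg, rootMultiplicity_mul (hfg ▸ hf0)]
  refine Even.add_odd ?_ hodd
  by_cases hwz : w = z
  · rwa [hwz, rootMultiplicity_X_sub_C_pow]
  · rw [rootMultiplicity_eq_zero (by simp [sub_eq_zero, hwz])]
    exact Even.zero

theorem nonneg_or_nonpos_on_Icc_of_even_rootMultiplicity {a b : ℝ} (f : ℝ[X])
    (h : ∀ z ∈ Ioo a b, Even (f.rootMultiplicity z)) :
    (∀ x ∈ Icc a b, 0 ≤ f.eval x) ∨ ∀ x ∈ Icc a b, f.eval x ≤ 0 := by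
  have hprod : ∀ x ∈ Icc a b, ∀ y ∈ Icc a b, x < y → 0 ≤ f.eval x * f.eval y := by
    intro x hx y hy hxy
    by_contra! hneg
    obtain ⟨z, hz, hodd⟩ := exists_odd_rootMultiplicity_of_eval_mul_eval_neg hxy f hneg
    exact Nat.not_even_iff_odd.2 hodd (h z ⟨hx.1.trans_lt hz.1, hz.2.trans_le hy.2⟩)
  by_contra! hcon
  obtain ⟨⟨x, hx, hfx⟩, ⟨y, hy, hfy⟩⟩ := hcon
  rcases lt_trichotomy x y with hxy | rfl | hyx
  · nlinarith [hprod x hx y hy hxy]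
  · linarith
  · nlinarith [hprod y hy x hx hyx]

end Polynomial

theorem sobNormM_lt_of_derivative_eq {p : ℝ} (hp : 0 < p) (m : ℕ) (μ : ℕ → Measure ℝ)
    {f g : ℝ[X]} (hd : derivative g = derivative f)
    (h0 : ∫ x, |g.eval x| ^ p ∂μ 0 < ∫ x, |f.eval x| ^ p ∂μ 0) :
    sobNormM p m μ g < sobNormM p m μ f := by
  refine Real.rpow_lt_rpow
    (Finset.sum_nonneg fun k _ => integral_nonneg fun x => by positivity) ?_ (by positivity)
  have hdk : ∀ k, derivative^[k + 1] g = derivative^[k + 1] f := fun k => by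
    rw [Function.iterate_succ_apply, Function.iterate_succ_apply, hd]
  rw [Finset.sum_range_succ', Finset.sum_range_succ']
  simp only [hdk, Function.iterate_zero_apply]
  exact add_lt_add_right h0 _

theorem stmt_8
    (p : ℝ) (hp : 1 < p) (m : ℕ)
    (μ : ℕ → Measure ℝ) (hfin : ∀ k ≤ m, IsFiniteMeasure (μ k))
    (hc : ∀ k ≤ m, IsCompact (msupport (μ k)))
    (h0inf : (msupport (μ 0)).Infinite)
    (n : ℕ) (hn : 1 ≤ n)
    (L : Polynomial ℝ) (hL : IsExtremalM p m μ n L) :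
    ∃ x ∈ interior (convexHull ℝ (msupport (μ 0))), Odd (rootMultiplicity x L) := by
  obtain ⟨hmonic, hdeg, hmin⟩ := hL
  have := hfin 0 m.zero_le
  set K := msupport (μ 0)
  have hK : IsCompact K := hc 0 m.zero_le
  by_contra! hcon
  have hsign := L.nonneg_or_nonpos_on_Icc_of_even_rootMultiplicity fun z hz =>
    Nat.not_odd_iff_even.1 <|
      hcon z (Ioo_csInf_csSup_subset_interior_convexHull hK h0inf.nonempty hz)
  have hKIcc : K ⊆ Icc (sInf K) (sSup K) := subset_Icc_csInf_csSup hK.bddBelow hK.bddAbove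
  obtain ⟨x₀, hx₀, hLx₀⟩ := (h0inf.sdiff (finite_setOfPred_isRoot hmonic.ne_zero)).nonempty
  obtain ⟨s, hs⟩ := exists_integral_abs_sub_rpow_lt_of_msupport hK hp L.continuous
    (hsign.imp (fun h x hx => h x (hKIcc hx)) (fun h x hx => h x (hKIcc hx))) hx₀ hLx₀
  have hQ : (L - C s).Monic := hmonic.sub_of_left <|
    degree_C_le.trans_lt (natDegree_pos_iff_degree_pos.1 (by omega))
  refine (sobNormM_lt_of_derivative_eq (by linarith) m μ (by simp) ?_).not_ge
    (hmin _ hQ (by rw [natDegree_sub_C, hdeg]))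
  simpa only [eval_sub, eval_C] using hs
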